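/- arXiv:2310.15312 — 8 statements merged into one kernel-verified Lean document; each statement's English description precedes it below -/
import Mathlib

section
/- For all integers h and k with k ≠ 0, and all natural numbers n, the number M_n(h,k) := k^n (B_n(h/k) - B_n) is an integer, where B_n(u) is the n-th Bernoulli polynomial and B_n = B_n(0). -/
/-! We show that `M_n(h,k) = k^n (B_n(h/k) - B_n)` is `p`-integral for every prime `p`.
Since `B_n(x + 1) - B_n(x) = n x^(n-1)`, replacing `h` by `h + k` changes `M_n(h,k)` by the
integer `n k h^(n-1)`, so we may assume that `p ∣ h k`. In the expansion
`M_n(h,k) = ∑_{i<n} C(n,i) B_i h^(n-i) k^i` every term with `i ≥ 1` then contains the factor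
`h k B_i`, which is `p`-integral because `p B_i` is, by von Staudt–Clausen. -/

open Finset

namespace Rat

theorem exists_eq_intCast_of_forall_mem_padicValuation_integer {q : ℚ}
    (hq : ∀ (p : ℕ) [Fact p.Prime], q ∈ (Rat.padicValuation p).integer) :
    ∃ m : ℤ, q = m := by
  refine ⟨q.num, (Rat.coe_int_num_of_den_eq_one ?_).symm⟩
  refine Nat.eq_one_iff_not_exists_prime_dvd.mpr fun p hp => ?_
  have := Fact.mk hp
  exact Rat.padicValuation_le_one_iff.mp (hq p)

variable {p : ℕ} [Fact p.Prime]

theorem inv_intCast_mem_padicValuation_integer {u : ℤ} (hu : ¬ (p : ℤ) ∣ u) :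
    (u : ℚ)⁻¹ ∈ (Rat.padicValuation p).integer := by
  rw [Valuation.mem_integer_iff, map_inv₀, Rat.padicValuation_cast,
    Int.padicValuation_eq_one_iff.mpr hu, inv_one]

theorem natCast_div_prime_mem_padicValuation_integer {q : ℕ} (hq : q.Prime) :
    (p : ℚ) / q ∈ (Rat.padicValuation p).integer := by
  have hp : p.Prime := Fact.out
  by_cases hqp : q = p
  · subst hqp
    simp [hp.ne_zero]
  · rw [div_eq_mul_inv]
    refine mul_mem (natCast_mem _ p) ?_
    exact_mod_cast inv_intCast_mem_padicValuation_integer (u := q) fun h =>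
      hqp ((Nat.prime_dvd_prime_iff_eq hp hq).mp (Int.natCast_dvd_natCast.mp h)).symm

end Rat

section Bernoulli

variable {p : ℕ} [Fact p.Prime]

theorem natCast_mul_bernoulli_mem_padicValuation_integer (m : ℕ) :
    (p : ℚ) * bernoulli m ∈ (Rat.padicValuation p).integer := by
  obtain ⟨k, rfl | rfl⟩ := m.even_or_odd'
  · obtain ⟨z, hz⟩ := Bernoulli.vonStaudt_clausen k
    rw [eq_sub_of_add_eq hz.symm, mul_sub, mul_sum]
    refine sub_mem (mul_mem (natCast_mem _ p) (intCast_mem _ z)) (sum_mem fun q hq => ?_)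
    rw [mul_one_div]
    exact Rat.natCast_div_prime_mem_padicValuation_integer (mem_filter.mp hq).2.1
  · rcases k.eq_zero_or_pos with rfl | hk
    · rw [bernoulli_one, neg_div, mul_neg, mul_one_div]
      exact neg_mem (Rat.natCast_div_prime_mem_padicValuation_integer Nat.prime_two)
    · rw [bernoulli_eq_zero_of_odd (odd_two_mul_add_one k) (by omega), mul_zero]
      exact zero_mem _

theorem intCast_mul_bernoulli_mem_padicValuation_integer {a : ℤ} (ha : (p : ℤ) ∣ a)
    (m : ℕ) :
    (a : ℚ) * bernoulli m ∈ (Rat.padicValuation p).integer := by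
  obtain ⟨d, rfl⟩ := ha
  rw [Int.cast_mul, Int.cast_natCast, mul_comm (p : ℚ), mul_assoc]
  exact mul_mem (intCast_mem _ d) (natCast_mul_bernoulli_mem_padicValuation_integer m)

end Bernoulli

noncomputable def almkvistMeurmanNumber (n : ℕ) (h k : ℤ) : ℚ :=
  (k : ℚ) ^ n * ((Polynomial.bernoulli n).eval ((h : ℚ) / k) - bernoulli n)

section AlmkvistMeurmanNumber

variable {k : ℤ} (n : ℕ) (h : ℤ)

theorem almkvistMeurmanNumber_eq_sum (hk : k ≠ 0) :
    almkvistMeurmanNumber n h k =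
      ∑ i ∈ range n, bernoulli i * n.choose i * (h : ℚ) ^ (n - i) * (k : ℚ) ^ i := by
  have hk' : (k : ℚ) ≠ 0 := Int.cast_ne_zero.mpr hk
  have hterm (i : ℕ) (hi : i ∈ range n) :
      (k : ℚ) ^ n * (bernoulli i * n.choose i * ((h : ℚ) / k) ^ (n - i)) =
        bernoulli i * n.choose i * (h : ℚ) ^ (n - i) * (k : ℚ) ^ i := by
    rw [← Nat.sub_add_cancel (mem_range.mp hi).le, pow_add, div_pow, Nat.add_sub_cancel]
    field_simp
  rw [almkvistMeurmanNumber, Polynomial.bernoulli, Polynomial.eval_finsetSum, sum_range_succ]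
  simp only [Polynomial.eval_monomial, Nat.sub_self, pow_zero, Nat.choose_self, Nat.cast_one,
    mul_one, add_sub_cancel_right, mul_sum]
  exact sum_congr rfl hterm

theorem almkvistMeurmanNumber_add_self (hk : k ≠ 0) :
    almkvistMeurmanNumber n (h + k) k =
      almkvistMeurmanNumber n h k + n * k * (h : ℚ) ^ (n - 1) := by
  have hk' : (k : ℚ) ≠ 0 := Int.cast_ne_zero.mpr hk
  have hshift : ((h + k : ℤ) : ℚ) / k = 1 + (h : ℚ) / k := by field_simp; push_cast; ring
  rw [almkvistMeurmanNumber, almkvistMeurmanNumber, hshift, Polynomial.bernoulli_eval_one_add]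
  rcases n with _ | n
  · simp
  · rw [div_pow]
    field_simp
    push_cast
    ring

theorem exists_almkvistMeurmanNumber_add_mul (hk : k ≠ 0) (t : ℕ) :
    ∃ z : ℤ, almkvistMeurmanNumber n (h + k * t) k = almkvistMeurmanNumber n h k + z := by
  induction t with
  | zero => exact ⟨0, by simp⟩
  | succ t ih =>
    obtain ⟨z, hz⟩ := ih
    refine ⟨z + n * k * (h + k * t) ^ (n - 1), ?_⟩
    rw [Nat.cast_succ, mul_add_one, ← add_assoc, almkvistMeurmanNumber_add_self n _ hk, hz]
    push_cast
    ring

theorem almkvistMeurmanNumber_mem_padicValuation_integer_of_dvd_mul {p : ℕ} [Fact p.Prime]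
    (hk : k ≠ 0) (hd : (p : ℤ) ∣ h * k) :
    almkvistMeurmanNumber n h k ∈ (Rat.padicValuation p).integer := by
  rw [almkvistMeurmanNumber_eq_sum n h hk]
  refine sum_mem fun i hi => ?_
  rcases i with _ | i
  · simpa using intCast_mem (Rat.padicValuation p).integer (h ^ n)
  · obtain ⟨j, rfl⟩ : ∃ j, n = i + 1 + (j + 1) :=
      ⟨n - (i + 2), by have := mem_range.mp hi; omega⟩
    set c := (i + 1 + (j + 1)).choose (i + 1)
    have hsplit :
        bernoulli (i + 1) * c * (h : ℚ) ^ (i + 1 + (j + 1) - (i + 1)) * (k : ℚ) ^ (i + 1) =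
          ((c * h ^ j * k ^ i : ℤ) : ℚ) * (((h * k : ℤ) : ℚ) * bernoulli (i + 1)) := by
      rw [Nat.add_sub_cancel_left]
      push_cast
      ring
    rw [hsplit]
    exact mul_mem (intCast_mem _ _) (intCast_mul_bernoulli_mem_padicValuation_integer hd _)

end AlmkvistMeurmanNumber

theorem exists_dvd_add_mul_mul (p : ℕ) [Fact p.Prime] (h k : ℤ) :
    ∃ t : ℕ, (p : ℤ) ∣ (h + k * t) * k := by
  by_cases hpk : (p : ℤ) ∣ k
  · exact ⟨0, dvd_mul_of_dvd_right hpk _⟩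
  · have hk : (k : ZMod p) ≠ 0 := by rwa [Ne, ZMod.intCast_zmod_eq_zero_iff_dvd]
    refine ⟨(-h / k : ZMod p).val, dvd_mul_of_dvd_left ?_ _⟩
    rw [← ZMod.intCast_zmod_eq_zero_iff_dvd]
    push_cast
    rw [ZMod.natCast_val, ZMod.cast_id, mul_div_cancel₀ _ hk, add_neg_cancel]

/-- **Almkvist–Meurman theorem**: for integers `h` and `k ≠ 0` and every natural
number `n`, the number `k^n * (B_n(h/k) - B_n)` is an integer, where `B_n` is the
`n`-th Bernoulli polynomial and `B_n = B_n(0)` the `n`-th Bernoulli number. -/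
theorem almkvist_meurman (h k : ℤ) (hk : k ≠ 0) (n : ℕ) :
    ∃ m : ℤ, (k : ℚ) ^ n *
      ((Polynomial.bernoulli n).eval ((h : ℚ) / (k : ℚ)) - bernoulli n) = (m : ℚ) := by
  refine Rat.exists_eq_intCast_of_forall_mem_padicValuation_integer fun p _ => ?_
  obtain ⟨t, ht⟩ := exists_dvd_add_mul_mul p h k
  obtain ⟨z, hz⟩ := exists_almkvistMeurmanNumber_add_mul n h hk t
  have hmem := almkvistMeurmanNumber_mem_padicValuation_integer_of_dvd_mul n (h + k * t) hk ht
  rw [hz] at hmem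
  simpa [almkvistMeurmanNumber] using sub_mem hmem (intCast_mem (Rat.padicValuation p).integer z)
end

section
/- If f and g are Hurwitz series with g having zero constant term, then the composition f(g(x)) is a Hurwitz series. -/
open PowerSeries

/-- A Hurwitz series: a formal power series `∑ f_n x^n / n!` over `ℚ` with all
`f_n = n! · (coefficient of x^n)` integers. -/
def IsHurwitz (f : PowerSeries ℚ) : Prop :=
  ∀ n : ℕ, ∃ m : ℤ, (n.factorial : ℚ) * PowerSeries.coeff n f = (m : ℚ)

/-- Composition `f(g(x))` of formal power series, valid when `g` has zero
constant term (so that the defining sums are finite). -/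
noncomputable def PowerSeries.comp (f g : PowerSeries ℚ) : PowerSeries ℚ :=
  PowerSeries.mk fun n =>
    ∑ k ∈ Finset.range (n + 1), PowerSeries.coeff k f * PowerSeries.coeff n (g ^ k)

/-!
Hurwitz series are closed under products and under `d/dX`, and a series is Hurwitz as soon as
its derivative is and its constant term is an integer. Hence, for `g` Hurwitz with
`g(0) = 0`, the divided powers `g^k / k!` are Hurwitz by induction on `k`, because
`(g^(k+1) / (k+1)!)' = (g^k / k!) · g'`. The `n`-th Hurwitz coefficient of `f(g(x))` is then
`∑_k (k! f_k) · (n! [x^n] g^k / k!)`, a sum of products of integers.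
-/

theorem Derivation.map_inv_factorial_smul_pow_succ {A : Type*} [CommRing A] [Algebra ℚ A]
    (D : Derivation ℚ A A) (a : A) (k : ℕ) :
    D (((k + 1).factorial : ℚ)⁻¹ • a ^ (k + 1)) = ((k.factorial : ℚ)⁻¹ • a ^ k) * D a := by
  rw [D.map_smul, D.leibniz_pow, Nat.add_sub_cancel, ← Nat.cast_smul_eq_nsmul ℚ, smul_smul,
    smul_mul_assoc, Nat.factorial_succ]
  congr 1
  push_cast
  field_simp

theorem isHurwitz_one : IsHurwitz 1 := by
  rintro (_ | n)
  · exact ⟨1, by simp⟩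
  · exact ⟨0, by simp [coeff_one]⟩

theorem IsHurwitz.mul {a b : PowerSeries ℚ} (ha : IsHurwitz a) (hb : IsHurwitz b) :
    IsHurwitz (a * b) := by
  intro n
  choose A hA using ha
  choose B hB using hb
  refine ⟨∑ p ∈ Finset.HasAntidiagonal.antidiagonal n, (n.choose p.1 : ℤ) * A p.1 * B p.2, ?_⟩
  rw [coeff_mul, Finset.mul_sum]
  push_cast
  refine Finset.sum_congr rfl ?_
  rintro ⟨i, j⟩ hij
  obtain rfl : i + j = n := Finset.HasAntidiagonal.mem_antidiagonal.mp hij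
  rw [← hA, ← hB, ← Nat.add_choose_mul_factorial_mul_factorial i j, Nat.choose_symm_add]
  push_cast
  ring

theorem IsHurwitz.derivative {a : PowerSeries ℚ} (ha : IsHurwitz a) : IsHurwitz (d⁄dX ℚ a) := by
  intro n
  obtain ⟨m, hm⟩ := ha (n + 1)
  refine ⟨m, ?_⟩
  rw [coeff_derivative, ← hm, Nat.factorial_succ]
  push_cast
  ring

theorem IsHurwitz.of_derivative {a : PowerSeries ℚ} (h0 : ∃ m : ℤ, constantCoeff a = m)
    (hd : IsHurwitz (d⁄dX ℚ a)) : IsHurwitz a := by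
  rintro (_ | n)
  · simpa using h0
  · obtain ⟨m, hm⟩ := hd n
    refine ⟨m, ?_⟩
    rw [coeff_derivative] at hm
    rw [← hm, Nat.factorial_succ]
    push_cast
    ring

theorem IsHurwitz.inv_factorial_smul_pow {g : PowerSeries ℚ} (hg : IsHurwitz g)
    (hg0 : constantCoeff g = 0) (k : ℕ) : IsHurwitz ((k.factorial : ℚ)⁻¹ • g ^ k) := by
  induction k with
  | zero => simpa using isHurwitz_one
  | succ k ih =>
    refine IsHurwitz.of_derivative ⟨0, by simp [hg0]⟩ ?_
    rw [Derivation.map_inv_factorial_smul_pow_succ]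
    exact ih.mul hg.derivative

theorem PowerSeries.factorial_mul_coeff_comp (f g : PowerSeries ℚ) (n : ℕ) :
    (n.factorial : ℚ) * coeff n (f.comp g) =
      ∑ k ∈ Finset.range (n + 1), ((k.factorial : ℚ) * coeff k f) *
        ((n.factorial : ℚ) * coeff n ((k.factorial : ℚ)⁻¹ • g ^ k)) := by
  rw [PowerSeries.comp, coeff_mk, Finset.mul_sum]
  refine Finset.sum_congr rfl fun k _ => ?_
  rw [map_smul, smul_eq_mul]
  field_simp

/-- If `f` and `g` are Hurwitz series and `g` has zero constant term, then the
composition `f(g(x))` is a Hurwitz series. -/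
theorem isHurwitz_comp (f g : PowerSeries ℚ) (hf : IsHurwitz f) (hg : IsHurwitz g)
    (hg0 : PowerSeries.constantCoeff g = 0) :
    IsHurwitz (PowerSeries.comp f g) := by
  intro n
  choose F hF using hf
  choose M hM using fun k => hg.inv_factorial_smul_pow hg0 k n
  refine ⟨∑ k ∈ Finset.range (n + 1), F k * M k, ?_⟩
  rw [PowerSeries.factorial_mul_coeff_comp]
  push_cast
  simp only [hF, hM]
end

section
/- If g = ∑_{n≥1} g_n x^n/n! is a Hurwitz series with g_1 = 1, then its compositional inverse is also a Hurwitz series. -/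
/-!
Hurwitz series form a subring of `ℚ⟦X⟧` that is stable under differentiation, and a series is
Hurwitz as soon as its derivative is and its constant term is an integer. Since
`(f ^ (k + 1) / (k + 1)!)' = (f ^ k / k!) * f'`, induction on `k` shows that the divided powers
`f ^ k / k!` of a Hurwitz series `f` without constant term are Hurwitz, and writing
`n! [x^n] g(f) = ∑ₖ (k! gₖ) (n! [x^n] f ^ k / k!)` shows that Hurwitz series are closed under
composition. The compositional inverse `h` of `g` is Mathlib's `substInv`, whose coefficients
satisfy `hₙ = -g₁⁻¹ [x^n] g(h₀ + ⋯ + hₙ₋₁ x^(n-1))` for `n ≥ 2`; by strong induction that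
truncation is Hurwitz, hence so is `hₙ`.
-/

open PowerSeries

open Finset Nat

theorem isHurwitz_iff_forall_mem_bot {f : ℚ⟦X⟧} :
    IsHurwitz f ↔ ∀ n, (n ! : ℚ) * coeff n f ∈ (⊥ : Subring ℚ) := by
  simp only [IsHurwitz, Subring.mem_bot, eq_comm]

theorem factorial_mul_coeff_mul {R : Type*} [CommSemiring R] (f g : R⟦X⟧) (n : ℕ) :
    (n ! : R) * coeff n (f * g) = ∑ p ∈ antidiagonal n,
      ((p.1 + p.2).choose p.2 : R) * ((p.1 ! : R) * coeff p.1 f) * ((p.2 ! : R) * coeff p.2 g) := by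
  rw [coeff_mul, mul_sum]
  refine sum_congr rfl fun p hp => ?_
  rw [← mem_antidiagonal.mp hp, ← Nat.add_choose_mul_factorial_mul_factorial]
  push_cast
  ring

def hurwitzSubring : Subring ℚ⟦X⟧ where
  carrier := {f | IsHurwitz f}
  zero_mem' := isHurwitz_iff_forall_mem_bot.2 fun n => by simp
  one_mem' := isHurwitz_iff_forall_mem_bot.2 fun n => by
    rw [coeff_one]; split_ifs <;> simp
  add_mem' {f g} hf hg := isHurwitz_iff_forall_mem_bot.2 fun n => by
    rw [map_add, mul_add]
    exact add_mem (isHurwitz_iff_forall_mem_bot.1 hf n) (isHurwitz_iff_forall_mem_bot.1 hg n)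
  neg_mem' {f} hf := isHurwitz_iff_forall_mem_bot.2 fun n => by
    rw [map_neg, mul_neg]
    exact neg_mem (isHurwitz_iff_forall_mem_bot.1 hf n)
  mul_mem' {f g} hf hg := isHurwitz_iff_forall_mem_bot.2 fun n => by
    rw [factorial_mul_coeff_mul]
    exact sum_mem fun p _ => mul_mem (mul_mem (natCast_mem _ _)
      (isHurwitz_iff_forall_mem_bot.1 hf _)) (isHurwitz_iff_forall_mem_bot.1 hg _)

theorem mem_hurwitzSubring {f : ℚ⟦X⟧} :
    f ∈ hurwitzSubring ↔ ∀ n, (n ! : ℚ) * coeff n f ∈ (⊥ : Subring ℚ) :=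
  isHurwitz_iff_forall_mem_bot

theorem factorial_mul_coeff_derivative {R : Type*} [CommSemiring R] (f : R⟦X⟧) (n : ℕ) :
    (n ! : R) * coeff n (derivative R f) = ((n + 1) ! : R) * coeff (n + 1) f := by
  rw [coeff_derivative, factorial_succ]
  push_cast
  ring

theorem derivative_mem_hurwitzSubring {f : ℚ⟦X⟧} (hf : f ∈ hurwitzSubring) :
    derivative ℚ f ∈ hurwitzSubring :=
  mem_hurwitzSubring.2 fun n => by
    rw [factorial_mul_coeff_derivative]
    exact mem_hurwitzSubring.1 hf (n + 1)

theorem mem_hurwitzSubring_of_derivative_mem {f : ℚ⟦X⟧}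
    (h0 : constantCoeff f ∈ (⊥ : Subring ℚ)) (hf : derivative ℚ f ∈ hurwitzSubring) :
    f ∈ hurwitzSubring :=
  mem_hurwitzSubring.2 fun
    | 0 => by simpa using h0
    | n + 1 => by
      rw [← factorial_mul_coeff_derivative]
      exact mem_hurwitzSubring.1 hf n

theorem inv_factorial_smul_pow_mem_hurwitzSubring {f : ℚ⟦X⟧} (hf : f ∈ hurwitzSubring)
    (hf0 : constantCoeff f = 0) (k : ℕ) :
    (k ! : ℚ)⁻¹ • f ^ k ∈ hurwitzSubring := by
  induction k with
  | zero => simp [one_mem]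
  | succ k ih =>
    have hderiv : derivative ℚ ((((k + 1) ! : ℕ) : ℚ)⁻¹ • f ^ (k + 1))
        = ((k ! : ℚ)⁻¹ • f ^ k) * derivative ℚ f := by
      rw [Derivation.map_smul, Derivation.leibniz_pow, Nat.add_sub_cancel,
        ← Nat.cast_smul_eq_nsmul ℚ, smul_smul, smul_eq_mul, ← smul_mul_assoc, factorial_succ]
      congr 2
      push_cast
      field_simp
    refine mem_hurwitzSubring_of_derivative_mem ?_ ?_
    · simp [hf0]
    · rw [hderiv]
      exact mul_mem ih (derivative_mem_hurwitzSubring hf)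

theorem coeff_pow_eq_zero_of_lt {R : Type*} [CommSemiring R] {h : R⟦X⟧}
    (hh : constantCoeff h = 0) {n k : ℕ} (hnk : n < k) :
    coeff n (h ^ k) = 0 :=
  X_pow_dvd_iff.mp (pow_dvd_pow_of_dvd (X_dvd_iff.mpr hh) k) n hnk

theorem comp_mem_hurwitzSubring {f h : ℚ⟦X⟧} (hf : f ∈ hurwitzSubring)
    (hh : h ∈ hurwitzSubring) (hh0 : constantCoeff h = 0) :
    f.comp h ∈ hurwitzSubring :=
  mem_hurwitzSubring.2 fun n => by
    have hterm : ∀ k, (n ! : ℚ) * (coeff k f * coeff n (h ^ k)) =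
        ((k ! : ℚ) * coeff k f) * ((n ! : ℚ) * coeff n ((k ! : ℚ)⁻¹ • h ^ k)) := by
      intro k
      rw [coeff_smul, smul_eq_mul]
      field_simp
    rw [PowerSeries.comp, coeff_mk, mul_sum]
    simp_rw [hterm]
    exact sum_mem fun k _ => mul_mem (mem_hurwitzSubring.1 hf k)
      (mem_hurwitzSubring.1 (inv_factorial_smul_pow_mem_hurwitzSubring hh hh0 k) n)

theorem comp_eq_subst (f : ℚ⟦X⟧) {h : ℚ⟦X⟧} (hh : constantCoeff h = 0) :
    f.comp h = f.subst h := by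
  ext n
  rw [PowerSeries.comp, coeff_mk, coeff_subst' (HasSubst.of_constantCoeff_zero' hh),
    finsum_eq_sum_of_support_subset (s := range (n + 1))]
  · simp only [smul_eq_mul]
  · intro k hk
    rw [Function.mem_support] at hk
    rw [coe_range, Set.mem_Iio, Nat.lt_succ_iff]
    by_contra! hnk
    exact hk (by rw [coeff_pow_eq_zero_of_lt hh hnk, smul_zero])

theorem C_mul_X_pow_mem_hurwitzSubring {c : ℚ} {i : ℕ} (hc : (i ! : ℚ) * c ∈ (⊥ : Subring ℚ)) :
    C c * X ^ i ∈ hurwitzSubring :=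
  mem_hurwitzSubring.2 fun n => by
    rw [coeff_C_mul_X_pow]
    split_ifs with h
    · exact h ▸ hc
    · simp

theorem substInv_mem_hurwitzSubring (P : ℚ⟦X⟧) [Invertible (coeff 1 P)]
    (hP : P ∈ hurwitzSubring) (hu : ⅟(coeff 1 P) ∈ (⊥ : Subring ℚ)) :
    P.substInv ∈ hurwitzSubring := by
  suffices h : ∀ n, (n ! : ℚ) * substInvFun P n ∈ (⊥ : Subring ℚ) from
    mem_hurwitzSubring.2 fun n => by simpa [substInv] using h n
  intro n
  induction n using Nat.strong_induction_on with
  | _ n ih =>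
  match n with
  | 0 => simp [substInvFun]
  | 1 => simpa [substInvFun] using hu
  | n + 2 =>
    set B := ∑ i : Fin (n + 2), C (substInvFun P i) * X ^ (i : ℕ)
    have hB : B ∈ hurwitzSubring :=
      sum_mem fun i _ => C_mul_X_pow_mem_hurwitzSubring (ih i (by omega))
    have hB0 : constantCoeff B = 0 := by simp [B, substInvFun, zero_pow_eq]
    have hPB := mem_hurwitzSubring.1 (comp_mem_hurwitzSubring hP hB hB0) (n + 2)
    rw [comp_eq_subst P hB0] at hPB
    simp only [substInvFun]
    rw [neg_mul, mul_neg, mul_left_comm]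
    exact neg_mem (mul_mem hu hPB)

/-- If `g = ∑_{n≥1} g_n x^n/n!` is a Hurwitz series with `g_1 = 1`, then `g` has a
compositional inverse that is a Hurwitz series. -/
theorem isHurwitz_comp_inverse (g : PowerSeries ℚ) (hg : IsHurwitz g)
    (hg0 : PowerSeries.constantCoeff g = 0) (hg1 : PowerSeries.coeff 1 g = 1) :
    ∃ h : PowerSeries ℚ, PowerSeries.constantCoeff h = 0 ∧ IsHurwitz h ∧
      PowerSeries.comp g h = PowerSeries.X ∧ PowerSeries.comp h g = PowerSeries.X := by
  let : Invertible (coeff 1 g) := invertibleOfNonzero (by simp [hg1])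
  have hu : ⅟(coeff 1 g) ∈ (⊥ : Subring ℚ) := by
    rw [invOf_eq_inv, hg1, inv_one]
    exact one_mem _
  refine ⟨g.substInv, constantCoeff_substInv g, substInv_mem_hurwitzSubring g hg hu, ?_, ?_⟩
  · rw [comp_eq_subst g (constantCoeff_substInv g), subst_substInv_right g hg0]
  · rw [comp_eq_subst _ hg0, subst_substInv_left g hg0]
end

section
/- There is a unique formal power series A over ℚ with zero constant term satisfying 1 + A = e^{(x/2)(2+A)}, and this A satisfies (1+A)^2 = e^{x(2+A)}. -/
/-!
The right-hand side `e^{(x/2)(2+A)}` depends on `A` only through `x·A`, so the coefficient of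
`x^n` in `e^{(x/2)(2+A)} - 1` depends only on the coefficients of `A` below `n`: the map
`A ↦ e^{(x/2)(2+A)} - 1` is a contraction for the `x`-adic metric and has a unique fixed point.
Composition with a series without constant term agrees with Mathlib's substitution, a ring
homomorphism, so `(e^S)^2 = e^{2S}` follows from `(e^x)^2 = e^{2x}`.
-/

open PowerSeries

/-- The formal exponential `e^S = ∑_{n≥0} S^n/n!` of a power series `S` with zero
constant term. -/
noncomputable def PowerSeries.expOf (S : PowerSeries ℚ) : PowerSeries ℚ :=
  PowerSeries.comp (exp ℚ) S

namespace PowerSeries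

section FixedPoint

open Function

variable {R : Type*} [CommRing R] {G : R⟦X⟧ → R⟦X⟧}
  (hG : ∀ A B n, X ^ n ∣ A - B → X ^ (n + 1) ∣ G A - G B)
include hG

theorem X_pow_dvd_iterate_sub_iterate (k : ℕ) (A B : R⟦X⟧) :
    X ^ k ∣ G^[k] A - G^[k] B := by
  induction k with
  | zero => simp
  | succ k ih =>
    rw [iterate_succ_apply', iterate_succ_apply']
    exact hG _ _ _ ih

theorem eq_of_isFixedPt {A B : R⟦X⟧} (hA : IsFixedPt G A) (hB : IsFixedPt G B) : A = B := by
  rw [← sub_eq_zero]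
  ext n
  have hdvd := X_pow_dvd_iterate_sub_iterate hG (n + 1) A B
  rw [iterate_fixed hA, iterate_fixed hB, X_pow_dvd_iff] at hdvd
  simpa using hdvd n n.lt_succ_self

theorem exists_isFixedPt : ∃ A : R⟦X⟧, IsFixedPt G A := by
  -- the `n`-th coefficient of `G^[k] 0` is constant for `k > n`
  set A : R⟦X⟧ := mk fun n => coeff n (G^[n + 1] 0)
  have hA : ∀ n, X ^ n ∣ A - G^[n] 0 := fun n => X_pow_dvd_iff.mpr fun m hm => by
    have hdvd := X_pow_dvd_iterate_sub_iterate hG (m + 1) 0 (G^[n - (m + 1)] 0)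
    rw [← iterate_add_apply, Nat.add_sub_cancel' hm, X_pow_dvd_iff] at hdvd
    simpa [A, sub_eq_zero] using hdvd m m.lt_succ_self
  refine ⟨A, ext fun n => ?_⟩
  have hdvd := hG _ _ _ (hA n)
  rw [← iterate_succ_apply' G n, X_pow_dvd_iff] at hdvd
  simpa [A, sub_eq_zero] using hdvd n n.lt_succ_self

theorem existsUnique_isFixedPt : ∃! A : R⟦X⟧, IsFixedPt G A :=
  (exists_isFixedPt hG).elim fun A hA =>
    ⟨A, hA, fun _ hB => eq_of_isFixedPt hG hB hA⟩

end FixedPoint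

theorem coeff_pow_eq_zero_of_lt {R : Type*} [CommSemiring R] {g : R⟦X⟧}
    (hg : constantCoeff g = 0) {n k : ℕ} (h : n < k) : coeff n (g ^ k) = 0 :=
  X_pow_dvd_iff.mp (pow_dvd_pow_of_dvd (X_dvd_iff.mpr hg) k) n h

theorem coeff_comp (f g : ℚ⟦X⟧) (n : ℕ) :
    coeff n (f.comp g) = ∑ k ∈ Finset.range (n + 1), coeff k f * coeff n (g ^ k) :=
  coeff_mk _ _

theorem comp_eq_subst (f : ℚ⟦X⟧) {g : ℚ⟦X⟧} (hg : constantCoeff g = 0) :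
    f.comp g = f.subst g := by
  ext n
  rw [coeff_comp, coeff_subst' (HasSubst.of_constantCoeff_zero' hg)]
  refine (finsum_eq_sum_of_support_subset _ fun k hk => ?_).symm
  rw [Finset.coe_range, Set.mem_Iio, Nat.lt_succ_iff]
  by_contra! hnk
  exact hk (by simp [coeff_pow_eq_zero_of_lt hg hnk])

theorem X_pow_dvd_comp_sub_comp (f : ℚ⟦X⟧) {g h : ℚ⟦X⟧} {m : ℕ} (hgh : X ^ m ∣ g - h) :
    X ^ m ∣ f.comp g - f.comp h := by
  refine X_pow_dvd_iff.mpr fun n hn => ?_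
  rw [map_sub, coeff_comp, coeff_comp, ← Finset.sum_sub_distrib]
  refine Finset.sum_eq_zero fun k _ => ?_
  have hpow : X ^ m ∣ g ^ k - h ^ k := hgh.trans (sub_dvd_pow_sub_pow g h k)
  rw [← mul_sub, ← map_sub, X_pow_dvd_iff.mp hpow n hn, mul_zero]

theorem constantCoeff_expOf (S : ℚ⟦X⟧) : constantCoeff (expOf S) = 1 := by
  rw [← coeff_zero_eq_constantCoeff_apply, expOf, coeff_comp]
  simp

theorem expOf_eq_subst {S : ℚ⟦X⟧} (hS : constantCoeff S = 0) : expOf S = (exp ℚ).subst S :=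
  comp_eq_subst _ hS

theorem expOf_pow {S : ℚ⟦X⟧} (hS : constantCoeff S = 0) (k : ℕ) :
    expOf S ^ k = expOf (k • S) := by
  have hS' := HasSubst.of_constantCoeff_zero' hS
  have hkS : constantCoeff (k • S) = 0 := by simp [hS]
  rw [expOf_eq_subst hS, expOf_eq_subst hkS, ← subst_pow hS', exp_pow_eq_rescale_exp,
    rescale_eq_subst, subst_comp_subst_apply (HasSubst.smul_X' _) hS', subst_smul hS',
    subst_X hS', Nat.cast_smul_eq_nsmul]

end PowerSeries

/-- There is a unique formal power series `A` over `ℚ` with zero constant term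
satisfying `1 + A = e^{(x/2)(2+A)}`, and this `A` satisfies `(1+A)^2 = e^{x(2+A)}`. -/
theorem postnikov_functional_equation :
    (∃! A : PowerSeries ℚ, PowerSeries.constantCoeff A = 0 ∧
        1 + A = PowerSeries.expOf (PowerSeries.C (1/2 : ℚ) * PowerSeries.X * (2 + A))) ∧
    ∀ A : PowerSeries ℚ, PowerSeries.constantCoeff A = 0 →
      1 + A = PowerSeries.expOf (PowerSeries.C (1/2 : ℚ) * PowerSeries.X * (2 + A)) →
      (1 + A) ^ 2 = PowerSeries.expOf (PowerSeries.X * (2 + A)) := by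
  set S : ℚ⟦X⟧ → ℚ⟦X⟧ := fun A => C (1/2 : ℚ) * X * (2 + A)
  have hcontract : ∀ A B n, X ^ n ∣ A - B →
      X ^ (n + 1) ∣ (expOf (S A) - 1) - (expOf (S B) - 1) := fun A B n hAB => by
    rw [sub_sub_sub_cancel_right]
    refine X_pow_dvd_comp_sub_comp _ ?_
    rw [pow_succ', show S A - S B = X * (C (1/2 : ℚ) * (A - B)) by ring]
    exact mul_dvd_mul_left X (hAB.mul_left _)
  refine ⟨?_, fun A _ hA => ?_⟩
  · obtain ⟨A, hA : expOf (S A) - 1 = A, huniq⟩ := existsUnique_isFixedPt hcontract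
    refine ⟨A, ⟨?_, (eq_add_of_sub_eq' hA).symm⟩, fun B ⟨_, hB⟩ => huniq B ?_⟩
    · rw [← hA, map_sub, constantCoeff_expOf, map_one, sub_self]
    · exact sub_eq_of_eq_add' hB.symm
  · rw [hA, expOf_pow (by simp)]
    congr 1
    rw [two_nsmul, ← add_mul, ← add_mul, ← map_add]
    norm_num
end

section
/- The formal power series A with zero constant term satisfying (1+A)^2 = e^{x(2+A)} also satisfies A = ∑_{n≥1} (2+A)^{n-1} x^n/n!, and consequently all coefficients of A as an exponential generating function are integers. -/
open PowerSeries

/-! Multiplying `S = ∑_{n≥1} (2+A)^{n-1} xⁿ/n!` by `2 + A` gives `e^{x(2+A)} - 1`, which by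
hypothesis is `(1+A)² - 1 = A(2+A)`; since `2 + A` has constant term `2` it cancels, so `A = S`.
Reading off coefficients, `n!·aₙ = ∑_{k=1}^n C(n,k)·(n-k)!·[x^{n-k}](2+A)^{k-1}`, where only
`a₀, …, a_{n-1}` enter the right-hand side. Integrality of `n!·[xⁿ]` is preserved by products
(Leibniz rule), so strong induction on `n` shows that every `n!·aₙ` is an integer. -/

open Finset
open scoped Nat

def IntegralEGFCoeff (f : PowerSeries ℚ) (n : ℕ) : Prop :=
  (n ! : ℚ) * coeff n f ∈ (⊥ : Subring ℚ)

theorem isHurwitz_iff {f : PowerSeries ℚ} : IsHurwitz f ↔ ∀ n, IntegralEGFCoeff f n := by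
  simp only [IsHurwitz, IntegralEGFCoeff, Subring.mem_bot, eq_comm]

theorem integralEGFCoeff_one (n : ℕ) : IntegralEGFCoeff 1 n := by
  rw [IntegralEGFCoeff, coeff_one]
  split_ifs <;> simp

theorem IntegralEGFCoeff.add {f g : PowerSeries ℚ} {n : ℕ} (hf : IntegralEGFCoeff f n)
    (hg : IntegralEGFCoeff g n) : IntegralEGFCoeff (f + g) n := by
  rw [IntegralEGFCoeff, map_add, mul_add]
  exact add_mem hf hg

theorem IntegralEGFCoeff.mul {f g : PowerSeries ℚ} {n : ℕ}
    (hf : ∀ i ≤ n, IntegralEGFCoeff f i) (hg : ∀ i ≤ n, IntegralEGFCoeff g i) :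
    IntegralEGFCoeff (f * g) n := by
  have leibniz : (n ! : ℚ) * coeff n (f * g) = ∑ p ∈ antidiagonal n,
      (n.choose p.2 : ℚ) * ((p.1 ! : ℚ) * coeff p.1 f) * ((p.2 ! : ℚ) * coeff p.2 g) := by
    rw [coeff_mul, mul_sum]
    refine sum_congr rfl fun p hp => ?_
    rw [← mem_antidiagonal.1 hp, ← Nat.add_choose_mul_factorial_mul_factorial]
    push_cast
    ring
  rw [IntegralEGFCoeff, leibniz]
  refine sum_mem fun p hp => mul_mem (mul_mem (natCast_mem _ _) (hf _ ?_)) (hg _ ?_)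
  · exact Finset.HasAntidiagonal.antidiagonal.fst_le hp
  · exact Finset.HasAntidiagonal.antidiagonal.snd_le hp

theorem IntegralEGFCoeff.pow {f : PowerSeries ℚ} {n : ℕ}
    (hf : ∀ i ≤ n, IntegralEGFCoeff f i) (k : ℕ) :
    ∀ i ≤ n, IntegralEGFCoeff (f ^ k) i := by
  induction k with
  | zero => exact fun i _ => by simpa using integralEGFCoeff_one i
  | succ k ih =>
    intro i hi
    rw [pow_succ]
    exact IntegralEGFCoeff.mul (fun j hj => ih j (hj.trans hi)) fun j hj => hf j (hj.trans hi)

theorem isHurwitz_two : IsHurwitz 2 := by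
  rw [isHurwitz_iff, ← one_add_one_eq_two]
  exact fun n => (integralEGFCoeff_one n).add (integralEGFCoeff_one n)

/-- `(e^{xB} - 1) / B`, written without dividing by `B`. -/
noncomputable def expSubOneDiv (B : PowerSeries ℚ) : PowerSeries ℚ :=
  mk fun m => ∑ n ∈ Icc 1 m, coeff m (B ^ (n - 1) * X ^ n) / (n ! : ℚ)

theorem coeff_expSubOneDiv (B : PowerSeries ℚ) (m : ℕ) :
    coeff m (expSubOneDiv B) = ∑ k ∈ Icc 1 m, coeff (m - k) (B ^ (k - 1)) / (k ! : ℚ) := by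
  rw [expSubOneDiv, coeff_mk]
  exact sum_congr rfl fun k hk => by rw [coeff_mul_X_pow', if_pos (mem_Icc.1 hk).2]

theorem coeff_expSubOneDiv_eq_of_le (B : PowerSeries ℚ) {m N : ℕ} (h : m ≤ N) :
    coeff m (expSubOneDiv B) =
      coeff m (∑ n ∈ Icc 1 N, C (n ! : ℚ)⁻¹ * (B ^ (n - 1) * X ^ n)) := by
  rw [expSubOneDiv, coeff_mk, map_sum]
  refine sum_subset (Icc_subset_Icc_right h) (fun n hnN hnm => ?_) |>.trans
    (sum_congr rfl fun n _ => by rw [coeff_C_mul, div_eq_inv_mul])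
  simp only [mem_Icc] at hnN hnm
  rw [coeff_mul_X_pow', if_neg (by omega), zero_div]

theorem coeff_expOf_X_mul_eq_of_le (B : PowerSeries ℚ) {m N : ℕ} (h : m ≤ N) :
    coeff m (expOf (X * B)) =
      coeff m (∑ n ∈ range (N + 1), C (n ! : ℚ)⁻¹ * (X * B) ^ n) := by
  rw [expOf, PowerSeries.comp, coeff_mk, map_sum]
  refine sum_subset (range_subset_range.2 (by omega)) (fun n _ hn => ?_) |>.trans
    (sum_congr rfl fun n _ => by simp [coeff_exp, coeff_C_mul])
  rw [mem_range, not_lt] at hn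
  rw [mul_pow, coeff_X_pow_mul', if_neg (by omega), mul_zero]

theorem sum_Icc_mul_eq_sum_range_sub_one (B : PowerSeries ℚ) (N : ℕ) :
    (∑ n ∈ Icc 1 N, C (n ! : ℚ)⁻¹ * (B ^ (n - 1) * X ^ n)) * B =
      ∑ n ∈ range (N + 1), C (n ! : ℚ)⁻¹ * (X * B) ^ n - 1 := by
  induction N with
  | zero => simp
  | succ N ih =>
    rw [sum_Icc_succ_top (by omega), add_mul, ih, sum_range_succ _ (N + 1)]
    simp only [add_tsub_cancel_right, mul_pow]
    ring

theorem expSubOneDiv_mul (B : PowerSeries ℚ) : expSubOneDiv B * B = expOf (X * B) - 1 := by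
  -- up to degree `m` both sides agree with finite partial sums, for which this is a finite identity
  ext m
  calc coeff m (expSubOneDiv B * B)
      = coeff m ((∑ n ∈ Icc 1 m, C (n ! : ℚ)⁻¹ * (B ^ (n - 1) * X ^ n)) * B) := by
        simp only [coeff_mul]
        exact sum_congr rfl fun p hp => by
          rw [coeff_expSubOneDiv_eq_of_le B (Finset.HasAntidiagonal.antidiagonal.fst_le hp)]
    _ = coeff m (expOf (X * B) - 1) := by
        rw [sum_Icc_mul_eq_sum_range_sub_one, map_sub, map_sub,
          coeff_expOf_X_mul_eq_of_le B le_rfl]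

theorem isHurwitz_of_eq_expSubOneDiv {A c : PowerSeries ℚ} (hc : IsHurwitz c)
    (hA : A = expSubOneDiv (c + A)) : IsHurwitz A := by
  rw [isHurwitz_iff] at hc ⊢
  intro n
  refine Nat.strong_induction_on n fun n ih => ?_
  have expand : (n ! : ℚ) * coeff n (expSubOneDiv (c + A)) = ∑ k ∈ Icc 1 n,
      (n.choose k : ℚ) * (((n - k) ! : ℚ) * coeff (n - k) ((c + A) ^ (k - 1))) := by
    rw [coeff_expSubOneDiv, mul_sum]
    refine sum_congr rfl fun k hk => ?_
    rw [← Nat.choose_mul_factorial_mul_factorial (mem_Icc.1 hk).2]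
    push_cast
    field_simp
  rw [hA, IntegralEGFCoeff, expand]
  refine sum_mem fun k hk => mul_mem (natCast_mem _ _) ?_
  have hk := mem_Icc.1 hk
  exact IntegralEGFCoeff.pow (fun i hi => (hc i).add (ih i (by omega))) _ _ le_rfl

/-- Any power series `A` over `ℚ` with zero constant term satisfying
`(1+A)^2 = e^{x(2+A)}` also satisfies `A = ∑_{n≥1} (2+A)^{n-1} x^n/n!`
(the infinite sum is a well-defined power series since the `n`-th term has order
at least `n`; here it is written coefficientwise), and consequently `A` is a
Hurwitz series. -/
theorem alternating_trees_hurwitz (A : PowerSeries ℚ)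
    (h0 : PowerSeries.constantCoeff A = 0)
    (hA : (1 + A) ^ 2 = PowerSeries.expOf (PowerSeries.X * (2 + A))) :
    A = (PowerSeries.mk fun m =>
          ∑ n ∈ Finset.Icc 1 m,
            PowerSeries.coeff m ((2 + A) ^ (n - 1) * PowerSeries.X ^ n)
              / (n.factorial : ℚ)) ∧
    IsHurwitz A := by
  have h2A : 2 + A ≠ 0 := fun h => by
    simpa [h0, map_ofNat constantCoeff 2] using congrArg constantCoeff h
  have hS : A = expSubOneDiv (2 + A) := by
    refine mul_right_cancel₀ h2A ?_
    rw [expSubOneDiv_mul, ← hA]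
    ring
  exact ⟨hS, isHurwitz_of_eq_expSubOneDiv isHurwitz_two hS⟩
end

section
/- The coefficient of x^n/n! in the formal power series 2 log(1+x)/(2+x) equals (-1)^{n-1} ∑_{i=0}^{n-1} i!(n-1-i)!, for n ≥ 1. -/
open PowerSeries

/-- The formal power series `log(1+x) = ∑_{n≥1} (-1)^{n-1} x^n/n` over `ℚ`. -/
noncomputable def logOnePlusX : PowerSeries ℚ :=
  PowerSeries.mk fun n => if n = 0 then 0 else (-1 : ℚ) ^ (n - 1) / n

open Finset Nat

/-! Write `T n = ∑_{i<n} i! (n-1-i)!`. Splitting the factor `m + 1 = (i + 1) + (m - i)` in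
`(m + 1) i! (m-1-i)!` writes `(m + 1) T m` as two shifted copies of `T (m+1)`, each missing one
boundary term `m!`; this is the recurrence `2 T (m+1) = (m+1) T m + 2 m!`, which is exactly the
coefficient identity `(2 + x) G = 2 log(1+x)` for the exponential generating function `G` of
`(-1)^{n-1} T n`. Hence `G = 2 log(1+x)/(2+x)`. -/

noncomputable def factorialConvolution (n : ℕ) : ℚ :=
  ∑ i ∈ range n, (i ! : ℚ) * ((n - 1 - i)! : ℚ)

lemma factorialConvolution_succ (m : ℕ) :
    factorialConvolution (m + 1) = ∑ i ∈ range (m + 1), (i ! : ℚ) * ((m - i)! : ℚ) := by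
  simp [factorialConvolution]

lemma two_mul_factorialConvolution_succ (m : ℕ) :
    2 * factorialConvolution (m + 1) = (m + 1) * factorialConvolution m + 2 * m ! := by
  have split : ∀ i ∈ range m, ((m : ℚ) + 1) * ((i ! : ℚ) * ((m - 1 - i)! : ℚ)) =
      ((i + 1)! : ℚ) * ((m - (i + 1))! : ℚ) + (i ! : ℚ) * ((m - i)! : ℚ) := by
    intro i hi
    obtain ⟨k, rfl⟩ := Nat.exists_eq_add_of_lt (mem_range.mp hi)
    rw [show i + k + 1 - 1 - i = k by omega, show i + k + 1 - (i + 1) = k by omega,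
      show i + k + 1 - i = k + 1 by omega, factorial_succ, factorial_succ]
    push_cast
    ring
  have lowered : factorialConvolution (m + 1) =
      ∑ i ∈ range m, ((i + 1)! : ℚ) * ((m - (i + 1))! : ℚ) + m ! := by
    rw [factorialConvolution_succ, sum_range_succ']
    simp
  have raised :
      factorialConvolution (m + 1) = ∑ i ∈ range m, (i ! : ℚ) * ((m - i)! : ℚ) + m ! := by
    rw [factorialConvolution_succ, sum_range_succ]
    simp
  have splitSum : ((m : ℚ) + 1) * factorialConvolution m =
      ∑ i ∈ range m, ((i + 1)! : ℚ) * ((m - (i + 1))! : ℚ) +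
        ∑ i ∈ range m, (i ! : ℚ) * ((m - i)! : ℚ) := by
    rw [factorialConvolution, mul_sum, sum_congr rfl split, sum_add_distrib]
  linear_combination lowered + raised - splitSum

lemma coeff_succ_C_add_X_mul {R : Type*} [CommSemiring R] (a : R) (f : PowerSeries R) (n : ℕ) :
    coeff (n + 1) ((C a + X) * f) = a * coeff (n + 1) f + coeff n f := by
  rw [add_mul, map_add, coeff_C_mul, coeff_succ_X_mul]

noncomputable def factorialConvolutionEGF : PowerSeries ℚ :=
  mk fun n => (-1) ^ (n - 1) * factorialConvolution n / n !

lemma factorialConvolutionEGF_mul_C_two_add_X :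
    factorialConvolutionEGF * (C 2 + X) = C 2 * logOnePlusX := by
  rw [mul_comm]
  ext (_ | n)
  · simp [factorialConvolutionEGF, logOnePlusX, factorialConvolution]
  · rw [coeff_succ_C_add_X_mul, coeff_C_mul]
    simp only [factorialConvolutionEGF, logOnePlusX, coeff_mk, Nat.add_sub_cancel, succ_ne_zero]
    have hrec := two_mul_factorialConvolution_succ n
    rw [factorial_succ]
    rcases n with _ | m
    · simp_all [factorialConvolution]
    · rw [show m + 1 - 1 = m by omega, pow_succ]
      push_cast at hrec ⊢
      field_simp
      linear_combination -hrec

theorem coeff_two_log_div_general (n : ℕ) :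
    (n.factorial : ℚ) * PowerSeries.coeff (R := ℚ) n
        (PowerSeries.C (R := ℚ) 2 * logOnePlusX * (PowerSeries.C (R := ℚ) 2 + PowerSeries.X)⁻¹) =
      (-1 : ℚ) ^ (n - 1) *
        ∑ i ∈ Finset.range n, (i.factorial : ℚ) * ((n - 1 - i).factorial : ℚ) := by
  have hEGF : C 2 * logOnePlusX * (C 2 + X)⁻¹ = factorialConvolutionEGF :=
    ((eq_mul_inv_iff_mul_eq (by simp)).2 factorialConvolutionEGF_mul_C_two_add_X).symm
  rw [hEGF, factorialConvolutionEGF, coeff_mk, ← factorialConvolution]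
  field_simp

/-- For `n ≥ 1`, the coefficient of `x^n/n!` in `2·log(1+x)/(2+x)` equals
`(-1)^{n-1} ∑_{i=0}^{n-1} i!(n-1-i)!`. -/
theorem coeff_two_log_div (n : ℕ) (hn : 1 ≤ n) :
    (n.factorial : ℚ) * PowerSeries.coeff (R := ℚ) n
        (PowerSeries.C (R := ℚ) 2 * logOnePlusX * (PowerSeries.C (R := ℚ) 2 + PowerSeries.X)⁻¹) =
      (-1 : ℚ) ^ (n - 1) *
        ∑ i ∈ Finset.range n, (i.factorial : ℚ) * ((n - 1 - i).factorial : ℚ) :=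
  coeff_two_log_div_general n
end

section
/- As formal power series in u and v over ℚ, ∑_{i,j≥0} (i! j!/(i+j+1)!) u^i v^j = (log(1-u) + log(1-v))/(uv - u - v). -/
open PowerSeries

/-!
The coefficients `β i j = i! j! / (i+j+1)!` (`factorialBeta`) are the Beta values `B(i+1, j+1)`; since
`(i+1) + (j+1) = (i+j+1) + 1` they satisfy `β (i+1) j + β i (j+1) = β i j`, and
`β i 0 = β 0 i = 1/(i+1)`. Multiplying their generating series by `uv - u - v`, the coefficient of
`u^(i+1) v^(j+1)` is `β i j - β (i+1) j - β i (j+1) = 0`, while those of `u^(i+1)` and `v^(j+1)`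
are `-1/(i+1)` and `-1/(j+1)`: exactly the coefficients of `log(1-u) + log(1-v)`.
-/

/-- `log(1-u) = -∑_{n≥1} u^n/n` as a formal power series over `ℚ`. -/
noncomputable def logOneMinus : PowerSeries ℚ :=
  PowerSeries.mk fun n => if n = 0 then 0 else -1 / (n : ℚ)

open Nat

noncomputable def factorialBeta (i j : ℕ) : ℚ := i ! * j ! / (i + j + 1)!

theorem factorialBeta_comm (i j : ℕ) : factorialBeta i j = factorialBeta j i := by
  rw [factorialBeta, factorialBeta, mul_comm, add_comm i]

theorem factorialBeta_zero_right (i : ℕ) : factorialBeta i 0 = 1 / (i + 1 : ℕ) := by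
  rw [factorialBeta, add_zero, factorial_succ, factorial_zero, cast_one, mul_one, cast_mul,
    div_mul_cancel_right₀ (cast_ne_zero.2 (factorial_ne_zero i)), one_div]

theorem factorialBeta_zero_left (j : ℕ) : factorialBeta 0 j = 1 / (j + 1 : ℕ) := by
  rw [factorialBeta_comm, factorialBeta_zero_right]

theorem factorialBeta_succ_left_add_succ_right (i j : ℕ) :
    factorialBeta (i + 1) j + factorialBeta i (j + 1) = factorialBeta i j := by
  have hfac : ((i + j + 1)! : ℚ) ≠ 0 := cast_ne_zero.2 (factorial_ne_zero _)
  simp only [factorialBeta, show i + 1 + j + 1 = i + j + 1 + 1 by ring,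
    show i + (j + 1) + 1 = i + j + 1 + 1 by ring, factorial_succ, cast_mul, cast_add, cast_one]
  field_simp
  ring

section Bivariate

variable {R : Type*} [CommRing R]

-- In `R⟦X⟧⟦X⟧` the outer variable is `v = X` and the inner one is `u = C X`.

theorem coeff_zero_mul_uv_sub_u_sub_v (F : R⟦X⟧⟦X⟧) :
    coeff 0 (F * (C X * X - C X - X)) = -(coeff 0 F * X) := by
  simp only [mul_sub, ← mul_assoc, map_sub, coeff_zero_mul_X, coeff_mul_C, zero_sub, sub_zero]

theorem coeff_succ_mul_uv_sub_u_sub_v (F : R⟦X⟧⟦X⟧) (j : ℕ) :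
    coeff (j + 1) (F * (C X * X - C X - X)) =
      (coeff j F - coeff (j + 1) F) * X - coeff j F := by
  simp only [mul_sub, ← mul_assoc, map_sub, coeff_succ_mul_X, coeff_mul_C, sub_mul]

end Bivariate

/-- As formal power series in two variables `u, v` over `ℚ` (realized as
`ℚ⟦u⟧⟦v⟧`, with `u = C X` and `v = X`),
`∑_{i,j≥0} (i! j!/(i+j+1)!) u^i v^j = (log(1-u) + log(1-v))/(uv - u - v)`,
stated in cross-multiplied form (equivalent, since `ℚ⟦u⟧⟦v⟧` is a domain and
`uv - u - v ≠ 0`). -/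
theorem double_factorial_gf :
    (PowerSeries.mk fun j : ℕ => PowerSeries.mk fun i : ℕ =>
        ((i.factorial : ℚ) * (j.factorial : ℚ) / ((i + j + 1).factorial : ℚ))) *
      (PowerSeries.C (R := PowerSeries ℚ) PowerSeries.X * PowerSeries.X -
        PowerSeries.C (R := PowerSeries ℚ) PowerSeries.X - PowerSeries.X) =
    PowerSeries.C (R := PowerSeries ℚ) logOneMinus +
      (PowerSeries.mk fun n : ℕ =>
        if n = 0 then 0 else PowerSeries.C (R := ℚ) (-1 / (n : ℚ))) := by
  change (mk fun j => mk fun i => factorialBeta i j) * _ = _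
  ext (_ | j) (_ | i)
  · simp [coeff_zero_mul_uv_sub_u_sub_v, logOneMinus]
  · simp [coeff_zero_mul_uv_sub_u_sub_v, coeff_succ_mul_X, logOneMinus,
      factorialBeta_zero_right, neg_div]
  · simp [coeff_succ_mul_uv_sub_u_sub_v, factorialBeta_zero_left, neg_div]
  · simp [coeff_succ_mul_uv_sub_u_sub_v, coeff_succ_mul_X,
      ← factorialBeta_succ_left_add_succ_right i j]
end

section
/- Let α₁, α₂, β₁, β₂ be commuting indeterminates and let F be the formal power series in x over ℚ[α₁,α₂,β₁,β₂] with zero constant term satisfying (1+α₁F)(1+β₂F)/((1+α₂F)(1+β₁F)) = e^{((α₁β₂-α₂β₁)F + α₁-β₁-α₂+β₂)x}. Then F satisfies F = (1+β₁F)(1+α₂F) ∑_{n≥1} ((α₁β₂-α₂β₁)F + α₁-α₂-β₁+β₂)^{n-1} x^n/n!, and hence every coefficient of F as an exponential generating function is a polynomial in α₁,α₂,β₁,β₂ with integer coefficients. -/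
/-!
Put `T = (α₁β₂ - α₂β₁)F + α₁ - α₂ - β₁ + β₂` and `G = ∑_{n ≥ 1} T^{n-1} xⁿ/n!`, so that
`e^{Tx} = 1 + T G`. Since `(1 + α₁F)(1 + β₂F) - (1 + α₂F)(1 + β₁F) = T F`, the functional
equation becomes `T F = T (1 + β₁F)(1 + α₂F) G`, and `T`, whose constant term is nonzero, cancels.

Series whose EGF coefficients up to order `N` are integral form a ring, and multiplying by a
series with zero constant term, such as `G`, raises that order by one. As `G` is built from powers
of `T`, the identity `F = (1 + β₁F)(1 + α₂F) G` lifts integrality of `F` from order `N` to `N + 1`.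
-/

open PowerSeries

/-- The coefficient ring `ℚ[α₁, α₂, β₁, β₂]`: variable `0` is `α₁`, `1` is `α₂`,
`2` is `β₁`, `3` is `β₂`. -/
abbrev R4 : Type := MvPolynomial (Fin 4) ℚ

/-- Composition `f(g(x))` of formal power series, valid when `g` has zero
constant term. -/
noncomputable def PowerSeries.comp' (f g : PowerSeries R4) : PowerSeries R4 :=
  PowerSeries.mk fun n =>
    ∑ k ∈ Finset.range (n + 1), PowerSeries.coeff k f * PowerSeries.coeff n (g ^ k)

/-- The formal exponential `e^S` of a power series `S` over `ℚ[α₁,α₂,β₁,β₂]` with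
zero constant term. -/
noncomputable def PowerSeries.expOf' (S : PowerSeries R4) : PowerSeries R4 :=
  PowerSeries.comp' (exp R4) S

local notation "α₁" => (MvPolynomial.X 0 : R4)
local notation "α₂" => (MvPolynomial.X 1 : R4)
local notation "β₁" => (MvPolynomial.X 2 : R4)
local notation "β₂" => (MvPolynomial.X 3 : R4)

open Finset
open scoped Nat

namespace PowerSeries

section Hurwitz

variable {R : Type*} [CommRing R] (S : Subring R)

theorem factorial_mul_coeff_mul (f g : R⟦X⟧) (n : ℕ) :
    (n ! : R) * coeff n (f * g) = ∑ p ∈ antidiagonal n,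
      ((p.1 + p.2).choose p.2 : R) * ((p.1 ! : R) * coeff p.1 f) *
        ((p.2 ! : R) * coeff p.2 g) := by
  rw [coeff_mul, mul_sum]
  refine sum_congr rfl fun p hp => ?_
  rw [← mem_antidiagonal.mp hp, ← Nat.add_choose_mul_factorial_mul_factorial]
  push_cast
  ring

/-- Series `∑ fⱼ xʲ / j!` that are generalized Hurwitz up to order `N`: `fⱼ ∈ S` for `j ≤ N`. -/
def hurwitzUpTo (N : ℕ) : Subring R⟦X⟧ where
  carrier := {f | ∀ j ≤ N, (j ! : R) * coeff j f ∈ S}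
  mul_mem' {f g} hf hg j hj := by
    rw [factorial_mul_coeff_mul]
    exact sum_mem fun p hp =>
      have hp : p.1 + p.2 = j := mem_antidiagonal.mp hp
      mul_mem (mul_mem (natCast_mem S _) (hf _ (by omega))) (hg _ (by omega))
  one_mem' j _ := by
    rw [coeff_one]
    split_ifs with h
    · simp [h, one_mem]
    · simp [zero_mem]
  add_mem' hf hg j hj := by
    rw [map_add, mul_add]
    exact add_mem (hf j hj) (hg j hj)
  zero_mem' j _ := by simp [zero_mem]
  neg_mem' hf j hj := by
    rw [map_neg, mul_neg]
    exact neg_mem (hf j hj)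

variable {S}

theorem C_mem_hurwitzUpTo {r : R} (hr : r ∈ S) (N : ℕ) : C r ∈ hurwitzUpTo S N := by
  intro j _
  rw [coeff_C]
  split_ifs with h
  · simpa [h] using hr
  · simp [zero_mem]

theorem mem_hurwitzUpTo_of_trunc_eq {N : ℕ} {f g : R⟦X⟧}
    (hfg : trunc (N + 1) f = trunc (N + 1) g) (hg : g ∈ hurwitzUpTo S N) :
    f ∈ hurwitzUpTo S N := by
  intro j hj
  have hlt : j < N + 1 := Nat.lt_succ_of_le hj
  rw [← coeff_coe_trunc_of_lt hlt, hfg, coeff_coe_trunc_of_lt hlt]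
  exact hg j hj

theorem mul_mem_hurwitzUpTo_succ {N : ℕ} {f g : R⟦X⟧} (hf : f ∈ hurwitzUpTo S N)
    (hg : g ∈ hurwitzUpTo S (N + 1)) (hg0 : constantCoeff g = 0) :
    f * g ∈ hurwitzUpTo S (N + 1) := by
  intro j hj
  rw [factorial_mul_coeff_mul]
  refine sum_mem fun p hp => ?_
  have hp : p.1 + p.2 = j := mem_antidiagonal.mp hp
  rcases Nat.eq_zero_or_pos p.2 with h2 | h2
  · simp [h2, hg0, zero_mem]
  · exact mul_mem (mul_mem (natCast_mem S _) (hf _ (by omega))) (hg _ (by omega))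

variable [Algebra ℚ R]

theorem C_mul_X_pow_mem_hurwitzUpTo (n N : ℕ) :
    C (algebraMap ℚ R (1 / n !)) * X ^ n ∈ hurwitzUpTo S N := by
  intro j _
  rw [coeff_C_mul_X_pow]
  split_ifs with h
  · rw [h, ← map_natCast (algebraMap ℚ R), ← map_mul,
      mul_one_div_cancel (Nat.cast_ne_zero.mpr n.factorial_ne_zero), map_one]
    exact one_mem S
  · simp [zero_mem]

end Hurwitz

section ExpDiv

variable {R : Type*} [CommRing R] [Algebra ℚ R]

/-- `(e^{Tx} - 1) / T = ∑_{n ≥ 1} T^{n-1} xⁿ / n!`. -/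
noncomputable def expDivSeries (T : R⟦X⟧) : R⟦X⟧ :=
  mk fun m => ∑ n ∈ Icc 1 m, algebraMap ℚ R (1 / n !) * coeff m (T ^ (n - 1) * X ^ n)

noncomputable def expDivPartialSum (T : R⟦X⟧) (N : ℕ) : R⟦X⟧ :=
  ∑ n ∈ Icc 1 N, T ^ (n - 1) * (C (algebraMap ℚ R (1 / n !)) * X ^ n)

theorem coeff_expDivSeries_of_le (T : R⟦X⟧) {m N : ℕ} (hm : m ≤ N) :
    coeff m (expDivSeries T) = coeff m (expDivPartialSum T N) := by
  rw [expDivSeries, coeff_mk, expDivPartialSum, map_sum]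
  refine (sum_subset (Icc_subset_Icc_right hm) fun n hn hn' => ?_).trans
    (sum_congr rfl fun n _ => ?_)
  · have hmn : m < n := by simp only [mem_Icc] at hn hn'; omega
    rw [coeff_mul_X_pow', if_neg (by omega), mul_zero]
  · rw [mul_left_comm, coeff_C_mul]

theorem trunc_expDivSeries (T : R⟦X⟧) (N : ℕ) :
    trunc (N + 1) (expDivSeries T) = trunc (N + 1) (expDivPartialSum T N) := by
  ext m
  simp only [coeff_trunc]
  split_ifs with h
  · exact coeff_expDivSeries_of_le T (Nat.le_of_lt_succ h)
  · rfl

theorem constantCoeff_expDivSeries (T : R⟦X⟧) : constantCoeff (expDivSeries T) = 0 := by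
  simp [expDivSeries]

theorem expDivSeries_mem_hurwitzUpTo {S : Subring R} {N : ℕ} {T : R⟦X⟧}
    (hT : T ∈ hurwitzUpTo S N) : expDivSeries T ∈ hurwitzUpTo S (N + 1) := by
  refine mem_hurwitzUpTo_of_trunc_eq (trunc_expDivSeries T (N + 1)) (sum_mem fun n hn => ?_)
  refine mul_mem_hurwitzUpTo_succ (pow_mem hT _) (C_mul_X_pow_mem_hurwitzUpTo n _) ?_
  have : n ≠ 0 := by simp only [mem_Icc] at hn; omega
  simp [this]

theorem mul_expDivPartialSum (T : R⟦X⟧) (N : ℕ) :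
    T * expDivPartialSum T N = ∑ n ∈ Icc 1 N, C (algebraMap ℚ R (1 / n !)) * (T * X) ^ n := by
  rw [expDivPartialSum, mul_sum]
  refine sum_congr rfl fun n hn => ?_
  obtain ⟨k, rfl⟩ : ∃ k, n = k + 1 := ⟨n - 1, by simp only [mem_Icc] at hn; omega⟩
  rw [Nat.add_sub_cancel, mul_pow, pow_succ T]
  ring

end ExpDiv

theorem expOf'_mul_X (T : R4⟦X⟧) : expOf' (T * X) = 1 + T * expDivSeries T := by
  refine ext fun m => ?_
  have hm := m.lt_succ_self
  rw [map_add, coeff_mul_eq_coeff_trunc_mul_trunc _ _ hm, trunc_expDivSeries,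
    ← coeff_mul_eq_coeff_trunc_mul_trunc _ _ hm, mul_expDivPartialSum, expOf', comp', coeff_mk,
    Nat.range_succ_eq_Icc_zero, ← insert_Icc_add_one_left_eq_Icc (Nat.zero_le m),
    sum_insert (by simp), map_sum]
  simp [coeff_exp, coeff_C_mul]

theorem eq_mul_of_cross_mul_eq {R : Type*} [CommRing R] [IsDomain R] {a₁ a₂ b₁ b₂ : R}
    {F G : R⟦X⟧} (hT : C (a₁ * b₂ - a₂ * b₁) * F + C (a₁ - a₂ - b₁ + b₂) ≠ 0)
    (h : (1 + C a₁ * F) * (1 + C b₂ * F) = (1 + C a₂ * F) * (1 + C b₁ * F) *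
      (1 + (C (a₁ * b₂ - a₂ * b₁) * F + C (a₁ - a₂ - b₁ + b₂)) * G)) :
    F = (1 + C b₁ * F) * (1 + C a₂ * F) * G := by
  refine mul_left_cancel₀ hT ?_
  simp only [map_sub, map_mul, map_add] at h ⊢
  linear_combination h

theorem mem_hurwitzUpTo_of_eq_mul_expDivSeries {R : Type*} [CommRing R] [Algebra ℚ R]
    {S : Subring R} {a b A B : R} (ha : a ∈ S) (hb : b ∈ S) (hA : A ∈ S) (hB : B ∈ S)
    {F : R⟦X⟧} (h0 : constantCoeff F = 0)
    (hF : F = (1 + C a * F) * (1 + C b * F) * expDivSeries (C A * F + C B)) (N : ℕ) :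
    F ∈ hurwitzUpTo S N := by
  induction N with
  | zero =>
    intro j hj
    simp [Nat.le_zero.mp hj, h0, zero_mem]
  | succ N ih =>
    have hC {r : R} (hr : r ∈ S) : C r ∈ hurwitzUpTo S N := C_mem_hurwitzUpTo hr N
    have hT : C A * F + C B ∈ hurwitzUpTo S N := add_mem (mul_mem (hC hA) ih) (hC hB)
    have hP : (1 + C a * F) * (1 + C b * F) ∈ hurwitzUpTo S N :=
      mul_mem (add_mem (one_mem _) (mul_mem (hC ha) ih)) (add_mem (one_mem _) (mul_mem (hC hb) ih))
    rw [hF]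
    exact mul_mem_hurwitzUpTo_succ hP (expDivSeries_mem_hurwitzUpTo hT)
      (constantCoeff_expDivSeries _)

end PowerSeries

/-- Let `F` be a power series in `x` over `ℚ[α₁,α₂,β₁,β₂]` with zero constant term
satisfying `(1+α₁F)(1+β₂F)/((1+α₂F)(1+β₁F)) = e^{((α₁β₂-α₂β₁)F + α₁-β₁-α₂+β₂)x}`
(stated in cross-multiplied form; `(1+α₂F)(1+β₁F)` is invertible, having constant
term `1`).  Then `F = (1+β₁F)(1+α₂F) ∑_{n≥1} ((α₁β₂-α₂β₁)F+α₁-α₂-β₁+β₂)^{n-1} x^n/n!`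
(written coefficientwise), and hence every EGF coefficient of `F` is a polynomial
in `α₁,α₂,β₁,β₂` with integer coefficients. -/
theorem drake_functional_equation (F : PowerSeries R4)
    (h0 : PowerSeries.constantCoeff F = 0)
    (hF : (1 + PowerSeries.C α₁ * F) * (1 + PowerSeries.C β₂ * F) =
        (1 + PowerSeries.C α₂ * F) * (1 + PowerSeries.C β₁ * F) *
          PowerSeries.expOf'
            ((PowerSeries.C (α₁ * β₂ - α₂ * β₁) * F +
              PowerSeries.C (α₁ - β₁ - α₂ + β₂)) * PowerSeries.X)) :
    F = (1 + PowerSeries.C β₁ * F) * (1 + PowerSeries.C α₂ * F) *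
        (PowerSeries.mk fun m =>
          ∑ n ∈ Finset.Icc 1 m,
            algebraMap ℚ R4 (1 / (n.factorial : ℚ)) *
              PowerSeries.coeff m
                ((PowerSeries.C (α₁ * β₂ - α₂ * β₁) * F +
                    PowerSeries.C (α₁ - α₂ - β₁ + β₂)) ^ (n - 1) *
                  PowerSeries.X ^ n)) ∧
    ∀ n : ℕ, ∃ p : MvPolynomial (Fin 4) ℤ,
      (n.factorial : R4) * PowerSeries.coeff n F =
        MvPolynomial.map (Int.castRingHom ℚ) p := by
  rw [show α₁ - β₁ - α₂ + β₂ = α₁ - α₂ - β₁ + β₂ by ring, expOf'_mul_X] at hF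
  have hB : α₁ - α₂ - β₁ + β₂ ≠ 0 := fun h => by
    simpa using congrArg (MvPolynomial.eval (Pi.single 0 1)) h
  have hT : C (α₁ * β₂ - α₂ * β₁) * F + C (α₁ - α₂ - β₁ + β₂) ≠ 0 := fun h =>
    hB (by simpa [h0] using congrArg constantCoeff h)
  have hFG := eq_mul_of_cross_mul_eq hT hF
  refine ⟨hFG, fun n => ?_⟩
  have hX (i : Fin 4) : MvPolynomial.X i ∈ (MvPolynomial.map (Int.castRingHom ℚ)).range :=
    ⟨MvPolynomial.X i, MvPolynomial.map_X _ i⟩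
  obtain ⟨p, hp⟩ := mem_hurwitzUpTo_of_eq_mul_expDivSeries (hX 2) (hX 1)
    (sub_mem (mul_mem (hX 0) (hX 3)) (mul_mem (hX 1) (hX 2)))
    (add_mem (sub_mem (sub_mem (hX 0) (hX 1)) (hX 2)) (hX 3)) h0 hFG n n le_rfl
  exact ⟨p, hp.symm⟩
end
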